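/- Let {c_n} be a sequence of positive numbers and {X_{n,j}, 1 ≤ j ≤ k_n, n ≥ 1} be an array of random variables satisfying the exponential-type maximal inequality (2.1) with nonnegative sequences {α_n}, {β_n}. Assume (i) for all λ > 0, ∑_{n=1}^∞ c_n (1 + α_n) ∑_{j=1}^{k_n} P{|X_{n,j}| > λ} < ∞, and (ii) there exist δ > 0 and q ≥ 1 such that ∑_{n=1}^∞ c_n β_n (∑_{j=1}^{k_n} P{|X_{n,j}| > δ})^q < ∞ and ∑_{n=1}^∞ c_n β_n (∑_{j=1}^{k_n} Var(X_{n,j} 1_{{|X_{n,j}| ≤ δ}}))^q < ∞. Then for all ε > 0, ∑_{n=1}^∞ c_n P{max_{1≤i≤k_n} |∑_{j=1}^i (X_{n,j} − E[X_{n,j} 1_{{|X_{n,j}| ≤ δ}}])| > ε} < ∞. -/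

import Mathlib

open MeasureTheory Finset
open scoped ENNReal NNReal

/-- Truncation at level `ℓ`: `g_ℓ(x) = (x ∧ ℓ) ∨ (-ℓ)`. -/
noncomputable def truncAt (l x : ℝ) : ℝ := max (min x l) (-l)


lemma truncAt_abs_le {l : ℝ} (hl : 0 ≤ l) (x : ℝ) : |truncAt l x| ≤ l := by
  rw [abs_le]
  exact ⟨le_max_right _ _, max_le (min_le_right _ _) (by linarith)⟩

lemma truncAt_eq_self {l x : ℝ} (h : |x| ≤ l) : truncAt l x = x := by
  rw [abs_le] at h
  rw [truncAt, min_eq_left h.2, max_eq_left (by linarith)]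

lemma truncAt_zero {l : ℝ} (hl : 0 ≤ l) : truncAt l 0 = 0 :=
  truncAt_eq_self (by simpa using hl)

lemma truncAt_lipschitz (l x y : ℝ) : |truncAt l x - truncAt l y| ≤ |x - y| := by
  refine (abs_max_sub_max_le_abs _ _ _).trans ?_
  have := abs_min_sub_min_le_max x l y l
  simpa using this

section Int
variable {Ω : Type*} [MeasurableSpace Ω] {μ : Measure Ω}

lemma integrable_of_abs_le [IsFiniteMeasure μ] {f : Ω → ℝ} (hf : Measurable f) {C : ℝ}
    (h : ∀ x, |f x| ≤ C) : Integrable f μ :=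
  (integrable_const C).mono' hf.aestronglyMeasurable (ae_of_all _ fun ω => by
    simpa using h ω)

/-- The second moment about the mean is at most the second moment about any point. -/
lemma integral_sq_mean_le [IsProbabilityMeasure μ] {Y : Ω → ℝ} (hY : Measurable Y) {C : ℝ}
    (hb : ∀ ω, |Y ω| ≤ C) (t : ℝ) :
    ∫ ω, (Y ω - ∫ ω', Y ω' ∂μ) ^ 2 ∂μ ≤ ∫ ω, (Y ω - t) ^ 2 ∂μ := by
  set a := ∫ ω', Y ω' ∂μ with ha
  have hYint : Integrable Y μ := integrable_of_abs_le hY hb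
  have h1 : Integrable (fun ω => (Y ω - a) ^ 2) μ := by
    refine integrable_of_abs_le ((hY.sub measurable_const).pow_const 2) (C := (C + |a|) ^ 2) ?_
    intro ω
    have h0 : |Y ω - a| ≤ C + |a| := (abs_sub _ _).trans (by gcongr; exact hb ω)
    have hC : (0:ℝ) ≤ C := (abs_nonneg _).trans (hb ω)
    rw [abs_pow]
    exact pow_le_pow_left₀ (abs_nonneg _) h0 2
  have h2 : Integrable (fun ω => (2 * (a - t)) * Y ω - (a - t) * (a + t)) μ :=
    (hYint.const_mul _).sub (integrable_const _)
  have key : (fun ω => (Y ω - t) ^ 2)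
      = fun ω => (Y ω - a) ^ 2 + ((2 * (a - t)) * Y ω - (a - t) * (a + t)) := by
    funext ω; ring
  rw [key, integral_add h1 h2, integral_sub (hYint.const_mul _) (integrable_const _),
    integral_const_mul, integral_const]
  simp only [measure_univ, probReal_univ, ENNReal.toReal_one, one_smul, ← ha]
  nlinarith [sq_nonneg (a - t)]

end Int


section MainAux
variable {Ω : Type*} [MeasurableSpace Ω] {μ : Measure Ω}
section perj
variable [IsProbabilityMeasure μ] {f : Ω → ℝ} (hf : Measurable f) {l δ : ℝ}
  (hl : 0 < l) (hlδ : l ≤ δ)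

include hf in
lemma meas_trunc : Measurable (fun ω => truncAt l (f ω)) :=
  ((hf.min measurable_const).max measurable_const)

include hf in
lemma meas_ind : Measurable (fun ω => if |f ω| ≤ δ then f ω else 0) :=
  Measurable.ite (measurableSet_le hf.abs measurable_const) hf measurable_const

lemma abs_ind_le (ω : Ω) (hδ0 : 0 ≤ δ) : |if |f ω| ≤ δ then f ω else 0| ≤ δ := by
  by_cases h : |f ω| ≤ δ <;> simp [h, abs_of_nonneg, hδ0]

include hf hl hlδ in
lemma drift_bound :
    |(∫ ω, truncAt l (f ω) ∂μ) - ∫ ω, (if |f ω| ≤ δ then f ω else 0) ∂μ|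
      ≤ 2 * δ * (μ {ω | l < |f ω|}).toReal := by
  have hδ0 : (0:ℝ) ≤ δ := hl.le.trans hlδ
  have hGint : Integrable (fun ω => truncAt l (f ω)) μ :=
    integrable_of_abs_le (meas_trunc hf) (fun ω => truncAt_abs_le hl.le (f ω))
  have hZint : Integrable (fun ω => if |f ω| ≤ δ then f ω else 0) μ :=
    integrable_of_abs_le (meas_ind hf) (fun ω => abs_ind_le ω hδ0)
  have hs : MeasurableSet {ω | l < |f ω|} := measurableSet_lt measurable_const hf.abs
  rw [← integral_sub hGint hZint]
  calc |∫ ω, (truncAt l (f ω) - if |f ω| ≤ δ then f ω else 0) ∂μ|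
      ≤ ∫ ω, |truncAt l (f ω) - if |f ω| ≤ δ then f ω else 0| ∂μ :=
      by simpa [Real.norm_eq_abs] using
        norm_integral_le_integral_norm (μ := μ)
          (f := fun ω => truncAt l (f ω) - if |f ω| ≤ δ then f ω else 0)
    _ ≤ ∫ ω, Set.indicator {ω | l < |f ω|} (fun _ => 2 * δ) ω ∂μ := by
        refine integral_mono (hGint.sub hZint).abs
          ((integrable_const (2*δ)).indicator hs) (fun ω => ?_)
        by_cases h : l < |f ω|
        · rw [Set.indicator_of_mem (show ω ∈ {ω | l < |f ω|} from h)]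
          have h1 := truncAt_abs_le hl.le (f ω)
          have h2 := abs_ind_le (f := f) ω hδ0
          calc |truncAt l (f ω) - if |f ω| ≤ δ then f ω else 0|
              ≤ |truncAt l (f ω)| + |if |f ω| ≤ δ then f ω else 0| := abs_sub _ _
            _ ≤ 2 * δ := by linarith
        · rw [Set.indicator_of_notMem (show ω ∉ {ω | l < |f ω|} from h)]
          push_neg at h
          rw [truncAt_eq_self h, if_pos (h.trans hlδ), sub_self, abs_zero]
    _ = 2 * δ * (μ {ω | l < |f ω|}).toReal := by
        rw [integral_indicator_const _ hs]; rw [smul_eq_mul, measureReal_def]; ring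

include hf hl hlδ in
lemma var_trunc_bound :
    ∫ ω, (truncAt l (f ω) - ∫ ω', truncAt l (f ω') ∂μ) ^ 2 ∂μ
      ≤ 2 * ProbabilityTheory.variance (fun ω => if |f ω| ≤ δ then f ω else 0) μ
        + 2 * δ ^ 2 * (μ {ω | δ < |f ω|}).toReal := by
  have hδ0 : (0:ℝ) ≤ δ := hl.le.trans hlδ
  set Z : Ω → ℝ := fun ω => if |f ω| ≤ δ then f ω else 0 with hZ
  have hZm : Measurable Z := meas_ind hf
  have hZb : ∀ ω, |Z ω| ≤ δ := fun ω => abs_ind_le ω hδ0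
  have hZint : Integrable Z μ := integrable_of_abs_le hZm hZb
  set m : ℝ := ∫ ω, Z ω ∂μ with hm
  have hs : MeasurableSet {ω | δ < |f ω|} := measurableSet_lt measurable_const hf.abs
  have hZsq : Integrable (fun ω => (Z ω - m) ^ 2) μ := by
    refine integrable_of_abs_le ((hZm.sub measurable_const).pow_const 2)
      (C := (δ + |m|)^2) (fun ω => ?_)
    rw [abs_pow]
    refine pow_le_pow_left₀ (abs_nonneg _) ?_ 2
    exact (abs_sub _ _).trans (by have := hZb ω; gcongr)
  have step1 : ∫ ω, (truncAt l (f ω) - ∫ ω', truncAt l (f ω') ∂μ) ^ 2 ∂μ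
      ≤ ∫ ω, (truncAt l (f ω) - truncAt l m) ^ 2 ∂μ :=
    integral_sq_mean_le (meas_trunc hf) (fun ω => truncAt_abs_le hl.le (f ω)) _
  have step2 : ∫ ω, (truncAt l (f ω) - truncAt l m) ^ 2 ∂μ
      ≤ ∫ ω, (2 * (Z ω - m) ^ 2 + Set.indicator {ω | δ < |f ω|} (fun _ => 2 * δ ^ 2) ω) ∂μ := by
    refine integral_mono
      (integrable_of_abs_le (((meas_trunc hf).sub measurable_const).pow_const 2)
        (C := (l + |truncAt l m|)^2) (fun ω => ?_))
      ((hZsq.const_mul 2).add ((integrable_const (2*δ^2)).indicator hs)) (fun ω => ?_)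
    · rw [abs_pow]
      refine pow_le_pow_left₀ (abs_nonneg _) ?_ 2
      exact (abs_sub _ _).trans (by have := truncAt_abs_le hl.le (f ω); gcongr)
    · by_cases h : |f ω| ≤ δ
      · have hind : ¬ ω ∈ {ω | δ < |f ω|} := by simpa using h
        rw [Set.indicator_of_notMem hind]
        have hZω : Z ω = f ω := if_pos h
        have hlip := truncAt_lipschitz l (f ω) m
        have h2 : (truncAt l (f ω) - truncAt l m)^2 ≤ (f ω - m)^2 := by
          rw [← sq_abs (truncAt l (f ω) - truncAt l m), ← sq_abs (f ω - m)]
          exact pow_le_pow_left₀ (abs_nonneg _) hlip 2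
        rw [hZω]; nlinarith [sq_nonneg (f ω - m)]
      · have hind : ω ∈ {ω | δ < |f ω|} := by simpa using not_le.mp h
        rw [Set.indicator_of_mem hind]
        have hZω : Z ω = 0 := if_neg h
        have h1 : |truncAt l (f ω) - truncAt l m| ≤ δ + |m| := by
          have ha := truncAt_abs_le hl.le (f ω)
          have hb : |truncAt l m| ≤ |m| := by
            have := truncAt_lipschitz l m 0
            rw [truncAt_zero hl.le, sub_zero, sub_zero] at this
            exact this
          calc |truncAt l (f ω) - truncAt l m| ≤ |truncAt l (f ω)| + |truncAt l m| := abs_sub _ _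
            _ ≤ δ + |m| := by linarith
        have h2 : (truncAt l (f ω) - truncAt l m)^2 ≤ (δ + |m|)^2 := by
          rw [← sq_abs (truncAt l (f ω) - truncAt l m)]
          exact pow_le_pow_left₀ (abs_nonneg _) h1 2
        have h3 : (0 - m)^2 = m^2 := by ring
        rw [hZω, h3]
        nlinarith [sq_nonneg (δ - |m|), sq_abs m]
  have step3 : ∫ ω, (2 * (Z ω - m) ^ 2 + Set.indicator {ω | δ < |f ω|} (fun _ => 2 * δ ^ 2) ω) ∂μ
      = 2 * (∫ ω, (Z ω - m) ^ 2 ∂μ) + 2 * δ ^ 2 * (μ {ω | δ < |f ω|}).toReal := by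
    rw [integral_add (hZsq.const_mul 2) ((integrable_const (2*δ^2)).indicator hs),
      integral_const_mul, integral_indicator_const _ hs, smul_eq_mul, measureReal_def]
    ring
  have step4 : ∫ ω, (Z ω - m) ^ 2 ∂μ = ProbabilityTheory.variance Z μ := by
    have hmem : MemLp Z 2 μ :=
      (memLp_top_of_bound hZm.aestronglyMeasurable δ (ae_of_all _ (fun ω => by
        simpa using hZb ω))).mono_exponent le_top
    exact (ProbabilityTheory.variance_eq_integral hZm.aemeasurable).symm
  rw [step4] at step3
  linarith [step1.trans (step2.trans_eq step3)]

end perj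
end MainAux


lemma ennreal_add_rpow_le (x y : ℝ≥0∞) {q : ℝ} (hq : 0 ≤ q) :
    (x + y) ^ q ≤ 2 ^ q * (x ^ q + y ^ q) := by
  calc (x + y) ^ q ≤ (2 * (x ⊔ y)) ^ q := by
        refine ENNReal.rpow_le_rpow ?_ hq
        rw [two_mul]
        exact add_le_add (le_max_left _ _) (le_max_right _ _)
    _ = 2 ^ q * (x ⊔ y) ^ q := ENNReal.mul_rpow_of_nonneg _ _ hq
    _ ≤ 2 ^ q * (x ^ q + y ^ q) := by
        gcongr
        rcases le_total x y with h | h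
        · rw [max_eq_right h]; exact le_add_self
        · rw [max_eq_left h]; exact le_self_add

lemma beta_term_bound {V Wr Pr Kp δ q : ℝ} (hK : 0 < Kp) (hq : 0 ≤ q) (hW : 0 ≤ Wr)
    (hPr : 0 ≤ Pr) (hV : V ≤ 2 * Wr + 2 * δ ^ 2 * Pr) :
    ENNReal.ofReal (V / Kp) ^ q
      ≤ ENNReal.ofReal (4 / Kp) ^ q * ENNReal.ofReal (Wr ^ q)
        + ENNReal.ofReal (4 * δ ^ 2 / Kp) ^ q * ENNReal.ofReal Pr ^ q := by
  have h1 : ENNReal.ofReal (V / Kp)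
      ≤ ENNReal.ofReal (2 * Wr / Kp) + ENNReal.ofReal (2 * δ ^ 2 * Pr / Kp) := by
    refine le_trans (ENNReal.ofReal_le_ofReal ?_) ENNReal.ofReal_add_le
    rw [← add_div]
    gcongr
  have e2 : (2 : ℝ≥0∞) = ENNReal.ofReal 2 := by norm_num
  calc ENNReal.ofReal (V / Kp) ^ q
      ≤ (ENNReal.ofReal (2 * Wr / Kp) + ENNReal.ofReal (2 * δ ^ 2 * Pr / Kp)) ^ q :=
        ENNReal.rpow_le_rpow h1 hq
    _ ≤ 2 ^ q * (ENNReal.ofReal (2 * Wr / Kp) ^ q + ENNReal.ofReal (2 * δ ^ 2 * Pr / Kp) ^ q) :=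
        ennreal_add_rpow_le _ _ hq
    _ = ENNReal.ofReal (4 / Kp) ^ q * ENNReal.ofReal (Wr ^ q)
        + ENNReal.ofReal (4 * δ ^ 2 / Kp) ^ q * ENNReal.ofReal Pr ^ q := by
        rw [mul_add]
        congr 1
        · rw [e2, ← ENNReal.mul_rpow_of_nonneg _ _ hq, ← ENNReal.ofReal_mul (by norm_num),
            show (2 : ℝ) * (2 * Wr / Kp) = (4 / Kp) * Wr by ring,
            ENNReal.ofReal_mul (by positivity), ENNReal.mul_rpow_of_nonneg _ _ hq,
            ENNReal.ofReal_rpow_of_nonneg hW hq]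
        · rw [e2, ← ENNReal.mul_rpow_of_nonneg _ _ hq, ← ENNReal.ofReal_mul (by norm_num),
            show (2 : ℝ) * (2 * δ ^ 2 * Pr / Kp) = (4 * δ ^ 2 / Kp) * Pr by ring,
            ENNReal.ofReal_mul (by positivity), ENNReal.mul_rpow_of_nonneg _ _ hq]

section P
variable {Ω : Type*} [MeasurableSpace Ω] {μ : Measure Ω}

lemma abs_integral_le_bound [IsProbabilityMeasure μ] {f : Ω → ℝ} {C : ℝ}
    (h : ∀ ω, |f ω| ≤ C) : |∫ ω, f ω ∂μ| ≤ C := by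
  have := norm_integral_le_of_norm_le_const (μ := μ) (f := f) (C := C)
    (ae_of_all _ fun ω => by simpa [Real.norm_eq_abs] using h ω)
  simpa [Real.norm_eq_abs] using this

end P

/-- The exponential-type maximal inequality (2.1) for the array `X` with row lengths `k`
and nonnegative sequences `α`, `β`: there are constants `C₁, C₂ > 0`, not depending on
`n, ℓ, λ, η`, such that for every `n ≥ 1` and all `ℓ, λ, η > 0`,
`P{max_{1≤i≤kₙ} |∑_{j=1}^i [g_ℓ(X_{n,j}) − E g_ℓ(X_{n,j})]| ≥ λ}
  ≤ αₙ P{max_{1≤j≤kₙ} |g_ℓ(X_{n,j}) − E g_ℓ(X_{n,j})| > C₁ η}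
    + βₙ (∑_{j=1}^{kₙ} E (g_ℓ(X_{n,j}) − E g_ℓ(X_{n,j}))² / (C₂ λ η))^{λ/η}`. -/
def ExpMaxIneq {Ω : Type*} [MeasurableSpace Ω] (μ : Measure Ω)
    (k : ℕ → ℕ) (X : ℕ → ℕ → Ω → ℝ) (α β : ℕ → ℝ) : Prop :=
  ∃ C₁ > (0 : ℝ), ∃ C₂ > (0 : ℝ), ∀ n, 1 ≤ n → ∀ l > (0 : ℝ), ∀ lam > (0 : ℝ), ∀ η > (0 : ℝ),
    μ {ω | ∃ i ∈ Finset.Icc 1 (k n), lam ≤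
        |∑ j ∈ Finset.Icc 1 i, (truncAt l (X n j ω) - ∫ ω', truncAt l (X n j ω') ∂μ)|}
      ≤ ENNReal.ofReal (α n) *
          μ {ω | ∃ j ∈ Finset.Icc 1 (k n),
            C₁ * η < |truncAt l (X n j ω) - ∫ ω', truncAt l (X n j ω') ∂μ|}
        + ENNReal.ofReal (β n) *
          ENNReal.ofReal ((∑ j ∈ Finset.Icc 1 (k n),
              ∫ ω', (truncAt l (X n j ω') - ∫ ω'', truncAt l (X n j ω'') ∂μ) ^ 2 ∂μ) /
            (C₂ * lam * η)) ^ (lam / η)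

set_option maxHeartbeats 2000000 in
/-- Theorem 1: convergence of the series
`∑ cₙ P{max_{1≤i≤kₙ} |∑_{j=1}^i (X_{n,j} − E X_{n,j} 1_{|X_{n,j}|≤δ})| > ε}`. -/
theorem theorem1 {Ω : Type*} [MeasurableSpace Ω] (μ : Measure Ω) [IsProbabilityMeasure μ]
    (k : ℕ → ℕ) (hk1 : ∀ n, 1 ≤ k n) (hk : Filter.Tendsto k Filter.atTop Filter.atTop)
    (X : ℕ → ℕ → Ω → ℝ) (hmeas : ∀ n j, j ∈ Finset.Icc 1 (k n) → Measurable (X n j))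
    (c α β : ℕ → ℝ) (hc : ∀ n, 0 < c n) (hα : ∀ n, 0 ≤ α n) (hβ : ∀ n, 0 ≤ β n)
    (hineq : ExpMaxIneq μ k X α β)
    -- (i)
    (hi : ∀ lam > (0 : ℝ),
      (∑' n, ENNReal.ofReal (c n * (1 + α n)) *
        ∑ j ∈ Finset.Icc 1 (k n), μ {ω | lam < |X n j ω|}) < ⊤)
    -- (ii)
    (δ : ℝ) (hδ : 0 < δ) (q : ℝ) (hq : 1 ≤ q)
    (hii₁ : (∑' n, ENNReal.ofReal (c n * β n) *
        (∑ j ∈ Finset.Icc 1 (k n), μ {ω | δ < |X n j ω|}) ^ q) < ⊤)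
    (hii₂ : (∑' n, ENNReal.ofReal (c n * β n) *
        ENNReal.ofReal ((∑ j ∈ Finset.Icc 1 (k n),
          ProbabilityTheory.variance (fun ω => if |X n j ω| ≤ δ then X n j ω else 0) μ) ^ q))
      < ⊤) :
    ∀ ε > (0 : ℝ),
      (∑' n, ENNReal.ofReal (c n) *
        μ {ω | ∃ i ∈ Finset.Icc 1 (k n), ε <
          |∑ j ∈ Finset.Icc 1 i,
            (X n j ω - ∫ ω', (if |X n j ω'| ≤ δ then X n j ω' else 0) ∂μ)|}) < ⊤ := by
  intro ε hε
  obtain ⟨C₁, hC₁, C₂, hC₂, hmax⟩ := hineq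
  have hq0 : (0:ℝ) < q := lt_of_lt_of_le one_pos hq
  set lam : ℝ := ε / 2 with hlam_def
  have hlam : 0 < lam := by positivity
  set η : ℝ := ε / (2 * q) with hη_def
  have hη : 0 < η := by positivity
  have hlamη : lam / η = q := by
    rw [hlam_def, hη_def]; field_simp
  set l : ℝ := min δ (C₁ * η / 2) with hl_def
  have hl : 0 < l := lt_min hδ (by positivity)
  have hlδ : l ≤ δ := min_le_left _ _
  have hlC : 2 * l ≤ C₁ * η := by
    have h := min_le_right δ (C₁ * η / 2)
    rw [hl_def]; linarith
  set Kp : ℝ := C₂ * lam * η with hKp_def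
  have hKp : 0 < Kp := by positivity
  -- the bounding sequence
  set g : ℕ → ℝ≥0∞ := fun n =>
    (if n = 0 then ENNReal.ofReal (c 0) else 0)
    + (ENNReal.ofReal (8 * δ / ε) + 1) *
        (ENNReal.ofReal (c n * (1 + α n)) * ∑ j ∈ Finset.Icc 1 (k n), μ {ω | l < |X n j ω|})
    + ENNReal.ofReal (4 / Kp) ^ q *
        (ENNReal.ofReal (c n * β n) * ENNReal.ofReal ((∑ j ∈ Finset.Icc 1 (k n),
          ProbabilityTheory.variance (fun ω => if |X n j ω| ≤ δ then X n j ω else 0) μ) ^ q))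
    + ENNReal.ofReal (4 * δ ^ 2 / Kp) ^ q *
        (ENNReal.ofReal (c n * β n) *
          (∑ j ∈ Finset.Icc 1 (k n), μ {ω | δ < |X n j ω|}) ^ q) with hg_def
  have hbound : ∀ n, ENNReal.ofReal (c n) *
      μ {ω | ∃ i ∈ Finset.Icc 1 (k n), ε <
        |∑ j ∈ Finset.Icc 1 i,
          (X n j ω - ∫ ω', (if |X n j ω'| ≤ δ then X n j ω' else 0) ∂μ)|} ≤ g n := by
    intro n
    by_cases hn0 : n = 0
    · subst hn0
      calc ENNReal.ofReal (c 0) * μ _ ≤ ENNReal.ofReal (c 0) * 1 := by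
            gcongr; exact prob_le_one
        _ = ENNReal.ofReal (c 0) := mul_one _
        _ ≤ g 0 := by
            rw [hg_def]; simp only [if_pos rfl]
            exact le_add_right (le_add_right (le_add_right le_rfl))
    have hn1 : 1 ≤ n := Nat.one_le_iff_ne_zero.mpr hn0
    have hPltop : (∑ j ∈ Finset.Icc 1 (k n), μ {ω | l < |X n j ω|}) ≠ ⊤ :=
      (ENNReal.sum_lt_top.mpr fun j _ => measure_lt_top μ _).ne
    set pl : ℝ := (∑ j ∈ Finset.Icc 1 (k n), μ {ω | l < |X n j ω|}).toReal with hpl_def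
    have hpl0 : 0 ≤ pl := ENNReal.toReal_nonneg
    have hofpl : ENNReal.ofReal pl = ∑ j ∈ Finset.Icc 1 (k n), μ {ω | l < |X n j ω|} :=
      ENNReal.ofReal_toReal hPltop
    by_cases hcase : pl ≤ ε / (8 * δ)
    · -- small tails: use the maximal inequality
      have hplsum : pl = ∑ j ∈ Finset.Icc 1 (k n), (μ {ω | l < |X n j ω|}).toReal := by
        rw [hpl_def, ENNReal.toReal_sum (fun j _ => measure_ne_top μ _)]
      have hsub : {ω | ∃ i ∈ Finset.Icc 1 (k n), ε <
            |∑ j ∈ Finset.Icc 1 i,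
              (X n j ω - ∫ ω', (if |X n j ω'| ≤ δ then X n j ω' else 0) ∂μ)|}
          ⊆ {ω | ∃ j ∈ Finset.Icc 1 (k n), l < |X n j ω|}
            ∪ {ω | ∃ i ∈ Finset.Icc 1 (k n), lam ≤
                |∑ j ∈ Finset.Icc 1 i,
                  (truncAt l (X n j ω) - ∫ ω', truncAt l (X n j ω') ∂μ)|} := by
        intro ω hω
        by_cases hAω : ω ∈ {ω | ∃ j ∈ Finset.Icc 1 (k n), l < |X n j ω|}
        · exact Or.inl hAω
        refine Or.inr ?_
        obtain ⟨i, hi_mem, hεlt⟩ := hω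
        have hik : i ≤ k n := (Finset.mem_Icc.mp hi_mem).2
        have hsubIcc : Finset.Icc 1 i ⊆ Finset.Icc 1 (k n) := Finset.Icc_subset_Icc_right hik
        have hAω' : ∀ j ∈ Finset.Icc 1 (k n), |X n j ω| ≤ l := by
          intro j hj
          by_contra hcon
          exact hAω ⟨j, hj, not_le.mp hcon⟩
        have hsplit : ∑ j ∈ Finset.Icc 1 i,
              (X n j ω - ∫ ω', (if |X n j ω'| ≤ δ then X n j ω' else 0) ∂μ)
            = (∑ j ∈ Finset.Icc 1 i,
                (truncAt l (X n j ω) - ∫ ω', truncAt l (X n j ω') ∂μ))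
              + ∑ j ∈ Finset.Icc 1 i, ((∫ ω', truncAt l (X n j ω') ∂μ)
                  - ∫ ω', (if |X n j ω'| ≤ δ then X n j ω' else 0) ∂μ) := by
          rw [← Finset.sum_add_distrib]
          refine Finset.sum_congr rfl (fun j hj => ?_)
          rw [truncAt_eq_self (hAω' j (hsubIcc hj))]
          ring
        have hdr : |∑ j ∈ Finset.Icc 1 i, ((∫ ω', truncAt l (X n j ω') ∂μ)
            - ∫ ω', (if |X n j ω'| ≤ δ then X n j ω' else 0) ∂μ)| ≤ ε / 4 := by
          have h24 : 2 * δ * (ε / (8 * δ)) = ε / 4 := by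
            field_simp
            ring
          calc |∑ j ∈ Finset.Icc 1 i, ((∫ ω', truncAt l (X n j ω') ∂μ)
                - ∫ ω', (if |X n j ω'| ≤ δ then X n j ω' else 0) ∂μ)|
              ≤ ∑ j ∈ Finset.Icc 1 i, |(∫ ω', truncAt l (X n j ω') ∂μ)
                  - ∫ ω', (if |X n j ω'| ≤ δ then X n j ω' else 0) ∂μ| :=
                Finset.abs_sum_le_sum_abs _ _
            _ ≤ ∑ j ∈ Finset.Icc 1 i, 2 * δ * (μ {ω | l < |X n j ω|}).toReal :=
                Finset.sum_le_sum (fun j hj =>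
                  drift_bound (hmeas n j (hsubIcc hj)) hl hlδ)
            _ ≤ ∑ j ∈ Finset.Icc 1 (k n), 2 * δ * (μ {ω | l < |X n j ω|}).toReal :=
                Finset.sum_le_sum_of_subset_of_nonneg hsubIcc (fun j _ _ => by positivity)
            _ = 2 * δ * pl := by rw [hplsum, Finset.mul_sum]
            _ ≤ 2 * δ * (ε / (8 * δ)) := by gcongr <;> positivity
            _ = ε / 4 := h24
        refine ⟨i, hi_mem, ?_⟩
        rw [hsplit] at hεlt
        have habs := abs_add_le
          (∑ j ∈ Finset.Icc 1 i, (truncAt l (X n j ω) - ∫ ω', truncAt l (X n j ω') ∂μ))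
          (∑ j ∈ Finset.Icc 1 i, ((∫ ω', truncAt l (X n j ω') ∂μ)
            - ∫ ω', (if |X n j ω'| ≤ δ then X n j ω' else 0) ∂μ))
        have habs2 := abs_abs_sub_abs_le_abs_sub
          (∑ j ∈ Finset.Icc 1 i, (truncAt l (X n j ω) - ∫ ω', truncAt l (X n j ω') ∂μ))
          (∑ j ∈ Finset.Icc 1 i, ((∫ ω', truncAt l (X n j ω') ∂μ)
            - ∫ ω', (if |X n j ω'| ≤ δ then X n j ω' else 0) ∂μ))
        rw [hlam_def]
        linarith
      have hμA : μ {ω | ∃ j ∈ Finset.Icc 1 (k n), l < |X n j ω|}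
          ≤ ∑ j ∈ Finset.Icc 1 (k n), μ {ω | l < |X n j ω|} := by
        have hU : {ω | ∃ j ∈ Finset.Icc 1 (k n), l < |X n j ω|}
            = ⋃ j ∈ Finset.Icc 1 (k n), {ω | l < |X n j ω|} := by
          ext ω; simp
        rw [hU]
        exact measure_biUnion_finset_le _ _
      have hmaxn := hmax n hn1 l hl lam hlam η hη
      have hempty : {ω | ∃ j ∈ Finset.Icc 1 (k n),
          C₁ * η < |truncAt l (X n j ω) - ∫ ω', truncAt l (X n j ω') ∂μ|} = ∅ := by
        ext ω
        simp only [Set.mem_setOf_eq, Set.mem_empty_iff_false, iff_false, not_exists]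
        intro j
        rintro ⟨hj, hgt⟩
        have h1 := truncAt_abs_le hl.le (X n j ω)
        have h2 : |∫ ω', truncAt l (X n j ω') ∂μ| ≤ l :=
          abs_integral_le_bound (fun ω' => truncAt_abs_le hl.le (X n j ω'))
        have h3 := abs_sub (truncAt l (X n j ω)) (∫ ω', truncAt l (X n j ω') ∂μ)
        linarith
      rw [hempty, measure_empty, mul_zero, zero_add, hlamη] at hmaxn
      have hPdtop : (∑ j ∈ Finset.Icc 1 (k n), μ {ω | δ < |X n j ω|}) ≠ ⊤ :=
        (ENNReal.sum_lt_top.mpr fun j _ => measure_lt_top μ _).ne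
      have hofPr : ENNReal.ofReal ((∑ j ∈ Finset.Icc 1 (k n), μ {ω | δ < |X n j ω|}).toReal)
          = ∑ j ∈ Finset.Icc 1 (k n), μ {ω | δ < |X n j ω|} := ENNReal.ofReal_toReal hPdtop
      have hWr0 : 0 ≤ ∑ j ∈ Finset.Icc 1 (k n),
          ProbabilityTheory.variance (fun ω => if |X n j ω| ≤ δ then X n j ω else 0) μ :=
        Finset.sum_nonneg (fun j _ => ProbabilityTheory.variance_nonneg _ _)
      have hV : (∑ j ∈ Finset.Icc 1 (k n),
            ∫ ω', (truncAt l (X n j ω') - ∫ ω'', truncAt l (X n j ω'') ∂μ) ^ 2 ∂μ)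
          ≤ 2 * (∑ j ∈ Finset.Icc 1 (k n),
              ProbabilityTheory.variance (fun ω => if |X n j ω| ≤ δ then X n j ω else 0) μ)
            + 2 * δ ^ 2 * (∑ j ∈ Finset.Icc 1 (k n), μ {ω | δ < |X n j ω|}).toReal := by
        calc (∑ j ∈ Finset.Icc 1 (k n),
              ∫ ω', (truncAt l (X n j ω') - ∫ ω'', truncAt l (X n j ω'') ∂μ) ^ 2 ∂μ)
            ≤ ∑ j ∈ Finset.Icc 1 (k n),
              (2 * ProbabilityTheory.variance
                  (fun ω => if |X n j ω| ≤ δ then X n j ω else 0) μ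
                + 2 * δ ^ 2 * (μ {ω | δ < |X n j ω|}).toReal) :=
              Finset.sum_le_sum (fun j hj => var_trunc_bound (hmeas n j hj) hl hlδ)
          _ = _ := by
              rw [Finset.sum_add_distrib, ← Finset.mul_sum, ← Finset.mul_sum,
                ENNReal.toReal_sum (fun j _ => measure_ne_top μ _)]
      have hbeta := beta_term_bound hKp hq0.le hWr0
        (ENNReal.toReal_nonneg (a := ∑ j ∈ Finset.Icc 1 (k n), μ {ω | δ < |X n j ω|})) hV
      rw [hofPr] at hbeta
      have hterm1 : ENNReal.ofReal (c n) *
            μ {ω | ∃ j ∈ Finset.Icc 1 (k n), l < |X n j ω|}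
          ≤ (ENNReal.ofReal (8 * δ / ε) + 1) * (ENNReal.ofReal (c n * (1 + α n)) *
              ∑ j ∈ Finset.Icc 1 (k n), μ {ω | l < |X n j ω|}) := by
        calc ENNReal.ofReal (c n) * μ {ω | ∃ j ∈ Finset.Icc 1 (k n), l < |X n j ω|}
            ≤ ENNReal.ofReal (c n * (1 + α n)) *
              ∑ j ∈ Finset.Icc 1 (k n), μ {ω | l < |X n j ω|} :=
              mul_le_mul' (ENNReal.ofReal_le_ofReal (by nlinarith [hc n, hα n])) hμA
          _ = 1 * (ENNReal.ofReal (c n * (1 + α n)) *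
              ∑ j ∈ Finset.Icc 1 (k n), μ {ω | l < |X n j ω|}) := (one_mul _).symm
          _ ≤ _ := mul_le_mul_left le_add_self _
      have hterm2 : ENNReal.ofReal (c n) *
            μ {ω | ∃ i ∈ Finset.Icc 1 (k n), lam ≤
              |∑ j ∈ Finset.Icc 1 i,
                (truncAt l (X n j ω) - ∫ ω', truncAt l (X n j ω') ∂μ)|}
          ≤ ENNReal.ofReal (4 / Kp) ^ q *
              (ENNReal.ofReal (c n * β n) * ENNReal.ofReal ((∑ j ∈ Finset.Icc 1 (k n),
                ProbabilityTheory.variance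
                  (fun ω => if |X n j ω| ≤ δ then X n j ω else 0) μ) ^ q))
            + ENNReal.ofReal (4 * δ ^ 2 / Kp) ^ q *
              (ENNReal.ofReal (c n * β n) *
                (∑ j ∈ Finset.Icc 1 (k n), μ {ω | δ < |X n j ω|}) ^ q) := by
        calc ENNReal.ofReal (c n) * μ {ω | ∃ i ∈ Finset.Icc 1 (k n), lam ≤
                |∑ j ∈ Finset.Icc 1 i,
                  (truncAt l (X n j ω) - ∫ ω', truncAt l (X n j ω') ∂μ)|}
            ≤ ENNReal.ofReal (c n) * (ENNReal.ofReal (β n) *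
              ENNReal.ofReal ((∑ j ∈ Finset.Icc 1 (k n),
                ∫ ω', (truncAt l (X n j ω') - ∫ ω'', truncAt l (X n j ω'') ∂μ) ^ 2 ∂μ) /
                  (C₂ * lam * η)) ^ q) := mul_le_mul' le_rfl hmaxn
          _ = ENNReal.ofReal (c n * β n) *
              ENNReal.ofReal ((∑ j ∈ Finset.Icc 1 (k n),
                ∫ ω', (truncAt l (X n j ω') - ∫ ω'', truncAt l (X n j ω'') ∂μ) ^ 2 ∂μ) /
                  Kp) ^ q := by
              rw [← mul_assoc, ← ENNReal.ofReal_mul (hc n).le, hKp_def]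
          _ ≤ ENNReal.ofReal (c n * β n) *
              (ENNReal.ofReal (4 / Kp) ^ q * ENNReal.ofReal ((∑ j ∈ Finset.Icc 1 (k n),
                  ProbabilityTheory.variance
                    (fun ω => if |X n j ω| ≤ δ then X n j ω else 0) μ) ^ q)
                + ENNReal.ofReal (4 * δ ^ 2 / Kp) ^ q *
                  (∑ j ∈ Finset.Icc 1 (k n), μ {ω | δ < |X n j ω|}) ^ q) :=
              mul_le_mul' le_rfl hbeta
          _ = _ := by ring
      calc ENNReal.ofReal (c n) * μ {ω | ∃ i ∈ Finset.Icc 1 (k n), ε <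
              |∑ j ∈ Finset.Icc 1 i,
                (X n j ω - ∫ ω', (if |X n j ω'| ≤ δ then X n j ω' else 0) ∂μ)|}
          ≤ ENNReal.ofReal (c n) *
              (μ {ω | ∃ j ∈ Finset.Icc 1 (k n), l < |X n j ω|}
                + μ {ω | ∃ i ∈ Finset.Icc 1 (k n), lam ≤
                    |∑ j ∈ Finset.Icc 1 i,
                      (truncAt l (X n j ω) - ∫ ω', truncAt l (X n j ω') ∂μ)|}) :=
            mul_le_mul' le_rfl ((measure_mono hsub).trans (measure_union_le _ _))
        _ = ENNReal.ofReal (c n) * μ {ω | ∃ j ∈ Finset.Icc 1 (k n), l < |X n j ω|}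
            + ENNReal.ofReal (c n) * μ {ω | ∃ i ∈ Finset.Icc 1 (k n), lam ≤
                |∑ j ∈ Finset.Icc 1 i,
                  (truncAt l (X n j ω) - ∫ ω', truncAt l (X n j ω') ∂μ)|} := mul_add _ _ _
        _ ≤ _ := add_le_add hterm1 hterm2
        _ ≤ g n := by
            rw [hg_def]
            simp only [if_neg hn0, zero_add]
            exact le_of_eq (by ring)
    · -- large tails: bound the probability by one
      push_neg at hcase
      have h8 : (0:ℝ) < 8 * δ := by positivity
      have hccc : c n ≤ 8 * δ / ε * (c n * (1 + α n) * pl) := by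
        have h1' : 1 ≤ 8 * δ / ε * pl := by
          rw [div_lt_iff₀ h8] at hcase
          rw [div_mul_eq_mul_div, le_div_iff₀ hε]
          nlinarith
        have h2' : c n ≤ c n * (1 + α n) := by nlinarith [hc n, hα n]
        nlinarith [mul_le_mul h2' h1' zero_le_one (by nlinarith [hc n, hα n] : (0:ℝ) ≤ c n * (1 + α n))]
      calc ENNReal.ofReal (c n) * μ _ ≤ ENNReal.ofReal (c n) * 1 := by
            gcongr; exact prob_le_one
        _ = ENNReal.ofReal (c n) := mul_one _
        _ ≤ ENNReal.ofReal (8 * δ / ε) *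
            (ENNReal.ofReal (c n * (1 + α n)) * ∑ j ∈ Finset.Icc 1 (k n), μ {ω | l < |X n j ω|}) := by
            rw [← hofpl, ← ENNReal.ofReal_mul (by nlinarith [hc n, hα n] : (0:ℝ) ≤ c n * (1 + α n)),
              ← ENNReal.ofReal_mul (by positivity : (0:ℝ) ≤ 8 * δ / ε)]
            exact ENNReal.ofReal_le_ofReal hccc
        _ ≤ (ENNReal.ofReal (8 * δ / ε) + 1) *
            (ENNReal.ofReal (c n * (1 + α n)) * ∑ j ∈ Finset.Icc 1 (k n), μ {ω | l < |X n j ω|}) := by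
            gcongr; exact le_self_add
        _ ≤ g n := by
            rw [hg_def]
            exact le_add_right (le_add_right (le_add_self))
  -- summing the bound
  refine lt_of_le_of_lt (ENNReal.tsum_le_tsum hbound) ?_
  rw [hg_def]
  simp only []
  rw [ENNReal.tsum_add, ENNReal.tsum_add, ENNReal.tsum_add, ENNReal.tsum_mul_left,
    ENNReal.tsum_mul_left, ENNReal.tsum_mul_left, tsum_ite_eq]
  have hfin1 : ENNReal.ofReal (c 0) < ⊤ := ENNReal.ofReal_lt_top
  have hfin2 : (ENNReal.ofReal (8 * δ / ε) + 1) *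
      (∑' n, ENNReal.ofReal (c n * (1 + α n)) *
        ∑ j ∈ Finset.Icc 1 (k n), μ {ω | l < |X n j ω|}) < ⊤ :=
    ENNReal.mul_lt_top (by finiteness) (hi l hl)
  have hfin3 : ENNReal.ofReal (4 / Kp) ^ q *
      (∑' n, ENNReal.ofReal (c n * β n) * ENNReal.ofReal ((∑ j ∈ Finset.Icc 1 (k n),
        ProbabilityTheory.variance (fun ω => if |X n j ω| ≤ δ then X n j ω else 0) μ) ^ q)) < ⊤ :=
    ENNReal.mul_lt_top (ENNReal.rpow_lt_top_of_nonneg hq0.le ENNReal.ofReal_ne_top) hii₂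
  have hfin4 : ENNReal.ofReal (4 * δ ^ 2 / Kp) ^ q *
      (∑' n, ENNReal.ofReal (c n * β n) *
        (∑ j ∈ Finset.Icc 1 (k n), μ {ω | δ < |X n j ω|}) ^ q) < ⊤ :=
    ENNReal.mul_lt_top (ENNReal.rpow_lt_top_of_nonneg hq0.le ENNReal.ofReal_ne_top) hii₁
  exact ENNReal.add_lt_top.mpr ⟨ENNReal.add_lt_top.mpr ⟨ENNReal.add_lt_top.mpr
    ⟨hfin1, hfin2⟩, hfin3⟩, hfin4⟩
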